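/- Let (T, s) be a signed triangulation of a convex polygon with associated proper 4-colouring of the vertices, and let x be a vertex of the polygon. If no two neighbours of x have the same colour, then x has degree 2 or 3 and the weight p(x) is nonzero mod 3. -/

import Mathlib

/-!
The colours of `x` and of its neighbours are pairwise distinct, so `x` has at most three
neighbours: its two boundary neighbours `p, q` and at most one diagonal `{x, y}`. By maximality
of the triangulation, if there is no diagonal at `x` then `{p, q}` is an edge and `{x, p, q}` is
the only triangle at `x`, so the weight of `x` is `±1`. If there is one, then `{p, y}` and
`{q, y}` are edges and the triangles at `x` are `{x, y, p}` and `{x, y, q}`; as `p` and `q` have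
different colours, compatibility across `{x, y}` gives both triangles the same sign, so the
weight of `x` is `±2 ≠ 0` in `ZMod 3`.
-/
namespace PolyFlip


/-- Two vertices of the convex `N`-gon are consecutive along the boundary. -/
def BdryAdj (N : ℕ) (i j : Fin N) : Prop :=
  (i.val + 1) % N = j.val ∨ (j.val + 1) % N = i.val

/-- `d` is a diagonal of the convex `N`-gon: an unordered pair of distinct,
non-consecutive vertices. -/
def IsDiag (N : ℕ) (d : Finset (Fin N)) : Prop :=
  ∃ i j : Fin N, i ≠ j ∧ ¬ BdryAdj N i j ∧ d = {i, j}

/-- The chord `d` crosses the chord `e` (in this orientation): the endpoints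
interlace in the cyclic (here: linear) order of the polygon's vertices. -/
def Crosses {N : ℕ} (d e : Finset (Fin N)) : Prop :=
  ∃ a b c f : Fin N, d = {a, b} ∧ e = {c, f} ∧ a < c ∧ c < b ∧ b < f

/-- A triangulation of the convex `N`-gon: a maximal set of pairwise
non-crossing diagonals. -/
structure Triangulation (N : ℕ) where
  diags : Finset (Finset (Fin N))
  isDiag : ∀ d ∈ diags, IsDiag N d
  noncross : ∀ d ∈ diags, ∀ e ∈ diags, ¬ Crosses d e
  maximal : ∀ d, IsDiag N d → (∀ e ∈ diags, ¬ Crosses d e ∧ ¬ Crosses e d) → d ∈ diags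

/-- `a` and `b` are joined by an edge of the triangulated polygon:
either a boundary edge, or a diagonal of the triangulation. -/
def IsEdge {N : ℕ} (T : Triangulation N) (a b : Fin N) : Prop :=
  a ≠ b ∧ (BdryAdj N a b ∨ ({a, b} : Finset (Fin N)) ∈ T.diags)

/-- `t` is a triangle (face) of the triangulation `T`. -/
def IsTriangle {N : ℕ} (T : Triangulation N) (t : Finset (Fin N)) : Prop :=
  ∃ a b c : Fin N, a ≠ b ∧ a ≠ c ∧ b ≠ c ∧ t = {a, b, c} ∧
    IsEdge T a b ∧ IsEdge T a c ∧ IsEdge T b c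

/-- A coloured triangulation: a triangulation together with a colour in
`Fin m` for each of its triangles. -/
structure ColouredTri (N m : ℕ) where
  T : Triangulation N
  col : {t : Finset (Fin N) // IsTriangle T t} → Fin m

/-- The degree of a vertex `x` in the triangulated polygon. -/
noncomputable def degree {N : ℕ} (T : Triangulation N) (x : Fin N) : ℕ :=
  Nat.card {y : Fin N // IsEdge T x y}

/-- The `σ`-flip at the diagonal `d`: `d = {a,b}` is a diagonal of `C` whose two
incident triangles `{a,b,x}` and `{a,b,y}` have the same colour `i`; it is replaced by
the other diagonal `{x,y}` of the quadrilateral, the two new triangles `{a,x,y}` and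
`{b,x,y}` get colour `σ i`, and all other triangles keep their colours. -/
def SFlipAt {N m : ℕ} (σ : Equiv.Perm (Fin m)) (d : Finset (Fin N))
    (C C' : ColouredTri N m) : Prop :=
  ∃ (a b x y : Fin N) (h₁ : IsTriangle C.T {a, b, x}) (h₂ : IsTriangle C.T {a, b, y})
    (h₁' : IsTriangle C'.T {a, x, y}) (h₂' : IsTriangle C'.T {b, x, y}),
    d = {a, b} ∧ d ∈ C.T.diags ∧ x ≠ y ∧
    C.col ⟨{a, b, x}, h₁⟩ = C.col ⟨{a, b, y}, h₂⟩ ∧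
    C'.T.diags = insert {x, y} (C.T.diags.erase d) ∧
    C'.col ⟨{a, x, y}, h₁'⟩ = σ (C.col ⟨{a, b, x}, h₁⟩) ∧
    C'.col ⟨{b, x, y}, h₂'⟩ = σ (C.col ⟨{a, b, x}, h₁⟩) ∧
    ∀ (t : Finset (Fin N)) (ht : IsTriangle C.T t) (ht' : IsTriangle C'.T t),
      t ≠ {a, b, x} → t ≠ {a, b, y} → C'.col ⟨t, ht'⟩ = C.col ⟨t, ht⟩

/-- The `σ`-flip relation. -/
def SFlip {N m : ℕ} (σ : Equiv.Perm (Fin m)) (C C' : ColouredTri N m) : Prop :=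
  ∃ d, SFlipAt σ d C C'

/-- The 2-coloured flip at a diagonal (the colour permutation swaps the two colours). -/
abbrev Flip2At {N : ℕ} (d : Finset (Fin N)) (C C' : ColouredTri N 2) : Prop :=
  SFlipAt (finRotate 2) d C C'

/-- The 2-coloured flip relation. -/
abbrev Flip2 {N : ℕ} (C C' : ColouredTri N 2) : Prop :=
  SFlip (finRotate 2) C C'

/-- The 2-coloured flip graph of the convex `N`-gon: vertices are the 2-coloured
triangulations, edges are single 2-coloured flips. -/
def flipGraph (N : ℕ) : SimpleGraph (ColouredTri N 2) where
  Adj C C' := C ≠ C' ∧ (Flip2 C C' ∨ Flip2 C' C)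
  symm := ⟨fun C C' h => ⟨h.1.symm, h.2.symm⟩⟩
  loopless := ⟨fun C h => h.1 rfl⟩

/-- The sign (`+1` for colour `0`, `-1` for colour `1`) of a colour, in `ZMod 3`. -/
def signVal (c : Fin 2) : ZMod 3 := if c = 0 then 1 else -1

/-- The weight of a vertex `x`: the sum, modulo 3, of the signs of all triangles
incident with `x`. -/
noncomputable def weight {N : ℕ} (C : ColouredTri N 2) (x : Fin N) : ZMod 3 :=
  ∑ᶠ t : {t : Finset (Fin N) // IsTriangle C.T t},
    if x ∈ t.val then signVal (C.col t) else 0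

/-- The number of triangles coloured `+1` (colour `0`). -/
noncomputable def plusCount {N : ℕ} (C : ColouredTri N 2) : ℕ :=
  Nat.card {t : {t : Finset (Fin N) // IsTriangle C.T t} // C.col t = 0}

/-- Adjacency in the `k`-dimensional hypercube: the two vertices differ in
exactly one coordinate. -/
def cubeAdj (k : ℕ) (u v : Fin k → Bool) : Prop := ∃! i, u i ≠ v i

/-- The `k`-dimensional hypercube graph on `{0,1}^k`. -/
def cubeGraph (k : ℕ) : SimpleGraph (Fin k → Bool) where
  Adj := cubeAdj k
  symm := by
    constructor
    rintro u v ⟨i, hi, hu⟩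
    exact ⟨i, hi.symm, fun j hj => hu j hj.symm⟩
  loopless := by
    constructor
    rintro u ⟨i, hi, -⟩
    exact hi rfl

/-- `f` exhibits a `k`-dimensional hypercube inside the connected component of `C`
in the 2-coloured flip graph. -/
def CubeEmb {N : ℕ} (C : ColouredTri N 2) (k : ℕ)
    (f : (Fin k → Bool) → ColouredTri N 2) : Prop :=
  Function.Injective f ∧
  (∀ u v, cubeAdj k u v → (flipGraph N).Adj (f u) (f v)) ∧
  ∀ u, (flipGraph N).Reachable C (f u)

/-- `G` contains a subdivision (topological copy) of `H`: there are branch vertices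
`f w` for the vertices `w` of `H` and internally disjoint paths in `G` between them
realising the edges of `H`. -/
def ContainsSubdivision {V W : Type*} (G : SimpleGraph V) (H : SimpleGraph W) : Prop :=
  ∃ f : W → V, Function.Injective f ∧
    ∃ P : ∀ u v : W, H.Adj u v → G.Walk (f u) (f v),
      (∀ u v (h : H.Adj u v), (P u v h).IsPath) ∧
      (∀ u v (h : H.Adj u v) (w : W), f w ∈ (P u v h).support → w = u ∨ w = v) ∧
      (∀ u₁ v₁ (h₁ : H.Adj u₁ v₁) u₂ v₂ (h₂ : H.Adj u₂ v₂),
        (s(u₁, v₁) : Sym2 W) ≠ s(u₂, v₂) →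
        ∀ x, x ∈ (P u₁ v₁ h₁).support → x ∈ (P u₂ v₂ h₂).support →
          (x = f u₁ ∨ x = f v₁) ∧ (x = f u₂ ∨ x = f v₂))

/-- Planarity, via Kuratowski's characterisation: a graph is planar iff it contains
no subdivision of `K₅` and no subdivision of `K₃,₃`. -/
def IsPlanar {V : Type*} (G : SimpleGraph V) : Prop :=
  ¬ ContainsSubdivision G (SimpleGraph.completeGraph (Fin 5)) ∧
  ¬ ContainsSubdivision G (completeBipartiteGraph (Fin 3) (Fin 3))

/-- `col` is a proper 4-colouring of the vertices associated to the signed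
triangulation `C`: adjacent vertices get distinct colours, and in every
quadrilateral formed by two triangles sharing a diagonal, the two vertices not on
the diagonal have equal colours iff the two triangles have different signs. -/
def Compatible {N : ℕ} (C : ColouredTri N 2) (col : Fin N → Fin 4) : Prop :=
  (∀ a b : Fin N, IsEdge C.T a b → col a ≠ col b) ∧
  ∀ (a b x z : Fin N) (h₁ : IsTriangle C.T {a, b, x}) (h₂ : IsTriangle C.T {a, b, z}),
    x ≠ z → ({a, b} : Finset (Fin N)) ∈ C.T.diags →
    (col x = col z ↔ C.col ⟨{a, b, x}, h₁⟩ ≠ C.col ⟨{a, b, z}, h₂⟩)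

theorem bdryAdj_iff_val {N : ℕ} {i j : Fin N} :
    BdryAdj N i j ↔ j.val = i.val + 1 ∨ i.val = j.val + 1 ∨
      (i.val + 1 = N ∧ j.val = 0) ∨ (j.val + 1 = N ∧ i.val = 0) := by
  have hmod : ∀ k : Fin N, (k.val + 1) % N = if k.val + 1 = N then 0 else k.val + 1 := by
    intro k
    split_ifs with h
    · rw [h, Nat.mod_self]
    · exact Nat.mod_eq_of_lt (by omega)
  unfold BdryAdj
  rw [hmod i, hmod j]
  split_ifs <;> omega

theorem exists_bdryAdj_iff (n : ℕ) (x : Fin (n + 3)) :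
    ∃ p q : Fin (n + 3), p ≠ q ∧ ∀ w, BdryAdj (n + 3) x w ↔ w = p ∨ w = q := by
  refine ⟨x + 1, x - 1, ?_, fun w => ?_⟩
  all_goals
    simp only [bdryAdj_iff_val, ne_eq, Fin.ext_iff]
    rw [Fin.val_add_one, Fin.coe_sub_one]
    simp only [Fin.ext_iff, Fin.val_last, Fin.val_zero]
    split_ifs <;> omega

theorem pair_eq_pair_iff {N : ℕ} {a b c d : Fin N} :
    ({a, b} : Finset (Fin N)) = {c, d} ↔ (a = c ∧ b = d) ∨ (a = d ∧ b = c) := by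
  rw [← Finset.coe_inj, Finset.coe_pair, Finset.coe_pair, Set.pair_eq_pair_iff]

def Interlace {N : ℕ} (a b c f : Fin N) : Prop :=
  Crosses ({a, b} : Finset (Fin N)) {c, f} ∨ Crosses ({c, f} : Finset (Fin N)) {a, b}

theorem interlace_comm_left {N : ℕ} {a b c f : Fin N} :
    Interlace b a c f ↔ Interlace a b c f := by
  rw [Interlace, Interlace, Finset.pair_comm]

theorem interlace_comm_right {N : ℕ} {a b c f : Fin N} :
    Interlace a b f c ↔ Interlace a b c f := by
  rw [Interlace, Interlace, Finset.pair_comm f]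

theorem interlace_iff {N : ℕ} {a b c f : Fin N} :
    Interlace a b c f ↔ c ≠ a ∧ c ≠ b ∧ f ≠ a ∧ f ≠ b ∧
      ((a < c ∧ c < b ∨ b < c ∧ c < a) ↔ ¬ (a < f ∧ f < b ∨ b < f ∧ f < a)) := by
  constructor
  · rintro (⟨a', b', c', f', hd, he, h⟩ | ⟨a', b', c', f', he, hd, h⟩) <;>
    · obtain ⟨rfl, rfl⟩ | ⟨rfl, rfl⟩ := pair_eq_pair_iff.1 hd <;>
      obtain ⟨rfl, rfl⟩ | ⟨rfl, rfl⟩ := pair_eq_pair_iff.1 he <;>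
      omega
  · intro h
    wlog hab : a < b generalizing a b
    · rw [← interlace_comm_left]
      exact this (by omega) (by omega)
    wlog hcf : c < f generalizing c f
    · rw [← interlace_comm_right]
      exact this (by omega) (by omega)
    by_cases hc : a < c ∧ c < b
    · exact Or.inl ⟨a, b, c, f, rfl, rfl, hc.1, hc.2, by omega⟩
    · exact Or.inr ⟨c, f, a, b, rfl, rfl, by omega, by omega, by omega⟩

section Chords

variable {N : ℕ} {x p q w y i j : Fin N}

theorem ne_of_bdryAdj_pair (hp : BdryAdj N x p) (hq : BdryAdj N x q)
    (hpq : p ≠ q) : x ≠ p := by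
  rw [bdryAdj_iff_val] at hp hq
  omega

theorem interlace_bdry_pair (hp : BdryAdj N x p) (hq : BdryAdj N x q) (hpq : p ≠ q)
    (h : Interlace p q i j) : i = x ∨ j = x := by
  rw [bdryAdj_iff_val] at hp hq
  rw [interlace_iff] at h
  omega

theorem Interlace.of_bdryAdj (hw : BdryAdj N x w) (hi : i ≠ x) (hj : j ≠ x)
    (h : Interlace w y i j) : Interlace x y i j := by
  rw [bdryAdj_iff_val] at hw
  rw [interlace_iff] at h ⊢
  omega

theorem bdryAdj_of_bdryAdj_pair (hp : BdryAdj N x p) (hq : BdryAdj N x q) (hpq : p ≠ q)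
    (hpq' : BdryAdj N p q) (hy : y ≠ x) : BdryAdj N x y := by
  rw [bdryAdj_iff_val] at *
  omega

theorem interlace_bdry_pair_of_not_bdryAdj (hp : BdryAdj N x p) (hq : BdryAdj N x q)
    (hpq : p ≠ q) (hy : y ≠ x) (hxy : ¬ BdryAdj N x y) : Interlace p q x y := by
  rw [bdryAdj_iff_val] at *
  rw [interlace_iff]
  omega

end Chords

section Triangulation

variable {N : ℕ} {T : Triangulation N}

theorem IsEdge.symm {a b : Fin N} (h : IsEdge T a b) : IsEdge T b a :=
  ⟨h.1.symm, h.2.imp Or.symm fun hd => Finset.pair_comm a b ▸ hd⟩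

theorem ne_and_not_bdryAdj_of_mem_diags {a b : Fin N} (h : ({a, b} : Finset (Fin N)) ∈ T.diags) :
    a ≠ b ∧ ¬ BdryAdj N a b := by
  obtain ⟨i, j, hij, hb, hd⟩ := T.isDiag _ h
  obtain ⟨rfl, rfl⟩ | ⟨rfl, rfl⟩ := pair_eq_pair_iff.1 hd
  · exact ⟨hij, hb⟩
  · exact ⟨hij.symm, fun h' => hb h'.symm⟩

theorem isEdge_of_mem_diags {a b : Fin N} (h : ({a, b} : Finset (Fin N)) ∈ T.diags) :
    IsEdge T a b :=
  ⟨(ne_and_not_bdryAdj_of_mem_diags h).1, Or.inr h⟩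

theorem not_interlace_of_mem_diags {a b c f : Fin N}
    (hab : ({a, b} : Finset (Fin N)) ∈ T.diags) (hcf : ({c, f} : Finset (Fin N)) ∈ T.diags) :
    ¬ Interlace a b c f :=
  fun h => h.elim (T.noncross _ hab _ hcf) (T.noncross _ hcf _ hab)

theorem isEdge_of_forall_not_interlace {u v : Fin N} (huv : u ≠ v)
    (h : ∀ i j, ({i, j} : Finset (Fin N)) ∈ T.diags → ¬ Interlace u v i j) :
    IsEdge T u v := by
  refine ⟨huv, or_iff_not_imp_left.2 fun hb => T.maximal _ ⟨u, v, huv, hb, rfl⟩ ?_⟩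
  intro e he
  obtain ⟨i, j, -, -, rfl⟩ := T.isDiag e he
  exact not_or.1 (h i j he)

theorem isEdge_of_bdryAdj_of_unique_diag {x w y : Fin N} (hw : BdryAdj N x w)
    (hxy : ({x, y} : Finset (Fin N)) ∈ T.diags)
    (hx : ∀ j, ({x, j} : Finset (Fin N)) ∈ T.diags → j = y) : IsEdge T w y := by
  have hwy : w ≠ y := fun h => (ne_and_not_bdryAdj_of_mem_diags hxy).2 (h ▸ hw)
  refine isEdge_of_forall_not_interlace hwy fun i j hij hcross => ?_
  by_cases hi : i = x
  · subst hi
    obtain rfl := hx j hij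
    rw [interlace_iff] at hcross
    omega
  by_cases hj : j = x
  · subst hj
    obtain rfl := hx i (Finset.pair_comm i j ▸ hij)
    rw [interlace_iff] at hcross
    omega
  exact not_interlace_of_mem_diags hxy hij (hcross.of_bdryAdj hw hi hj)

theorem exists_eq_insert_pair_of_isTriangle {x : Fin N} {t : Finset (Fin N)}
    (ht : IsTriangle T t) (hx : x ∈ t) :
    ∃ u v, IsEdge T x u ∧ IsEdge T x v ∧ IsEdge T u v ∧ t = {x, u, v} := by
  obtain ⟨a, b, c, -, -, -, rfl, hab, hac, hbc⟩ := ht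
  simp only [Finset.mem_insert, Finset.mem_singleton] at hx
  rcases hx with rfl | rfl | rfl
  · exact ⟨b, c, hab, hac, hbc, rfl⟩
  · exact ⟨a, c, hab.symm, hbc, hac, Finset.insert_comm _ _ _⟩
  · refine ⟨a, b, hac.symm, hbc.symm, hab, ?_⟩
    rw [Finset.pair_comm b x, Finset.insert_comm]

theorem isTriangle_of_isEdge {x u v : Fin N} (hu : IsEdge T x u) (hv : IsEdge T x v)
    (huv : IsEdge T u v) : IsTriangle T {x, u, v} :=
  ⟨x, u, v, hu.1, hv.1, huv.1, rfl, hu, hv, huv⟩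

end Triangulation

section BoundaryNeighbours

variable {N : ℕ} {T : Triangulation N} {x p q y : Fin N}
  (hbdry : ∀ w, BdryAdj N x w ↔ w = p ∨ w = q)
include hbdry

theorem ne_and_ne_of_mem_diags (hxy : ({x, y} : Finset (Fin N)) ∈ T.diags) :
    y ≠ p ∧ y ≠ q := by
  have hnb := (ne_and_not_bdryAdj_of_mem_diags hxy).2
  exact ⟨fun h => hnb ((hbdry y).2 (Or.inl h)), fun h => hnb ((hbdry y).2 (Or.inr h))⟩

theorem eq_of_mem_diags_of_isEdge_imp (hnbr : ∀ w, IsEdge T x w → w = p ∨ w = q ∨ w = y)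
    {j : Fin N} (hj : ({x, j} : Finset (Fin N)) ∈ T.diags) : j = y := by
  obtain ⟨hjp, hjq⟩ := ne_and_ne_of_mem_diags hbdry hj
  exact ((hnbr j (isEdge_of_mem_diags hj)).resolve_left hjp).resolve_left hjq

theorem isEdge_iff_eq_or_mem_diags (hpq : p ≠ q) :
    IsEdge T x y ↔ y = p ∨ y = q ∨ ({x, y} : Finset (Fin N)) ∈ T.diags := by
  have hp := (hbdry p).2 (Or.inl rfl)
  have hq := (hbdry q).2 (Or.inr rfl)
  constructor
  · rintro ⟨-, hb | hd⟩
    · exact ((hbdry y).1 hb).elim Or.inl (Or.inr ∘ Or.inl)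
    · exact Or.inr (Or.inr hd)
  · rintro (rfl | rfl | hd)
    · exact ⟨ne_of_bdryAdj_pair hp hq hpq, Or.inl hp⟩
    · exact ⟨ne_of_bdryAdj_pair hq hp hpq.symm, Or.inl hq⟩
    · exact isEdge_of_mem_diags hd

theorem isEdge_bdry_pair_of_forall_not_mem_diags (hpq : p ≠ q)
    (hx : ∀ j, ({x, j} : Finset (Fin N)) ∉ T.diags) : IsEdge T p q := by
  refine isEdge_of_forall_not_interlace hpq fun i j hij hcross => ?_
  rcases interlace_bdry_pair ((hbdry p).2 (Or.inl rfl)) ((hbdry q).2 (Or.inr rfl)) hpq hcross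
    with rfl | rfl
  · exact hx j hij
  · exact hx i (Finset.pair_comm i j ▸ hij)

theorem not_isEdge_bdry_pair (hpq : p ≠ q) (hxy : ({x, y} : Finset (Fin N)) ∈ T.diags) :
    ¬ IsEdge T p q := by
  have hp := (hbdry p).2 (Or.inl rfl)
  have hq := (hbdry q).2 (Or.inr rfl)
  obtain ⟨hne, hnb⟩ := ne_and_not_bdryAdj_of_mem_diags hxy
  rintro ⟨-, hb | hd⟩
  · exact hnb (bdryAdj_of_bdryAdj_pair hp hq hpq hb hne.symm)
  · exact not_interlace_of_mem_diags hd hxy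
      (interlace_bdry_pair_of_not_bdryAdj hp hq hpq hne.symm hnb)

end BoundaryNeighbours

theorem degree_eq_ncard {N : ℕ} (T : Triangulation N) (x : Fin N) :
    degree T x = {y | IsEdge T x y}.ncard :=
  Nat.card_coe_set_eq _

theorem signVal_ne_zero (c : Fin 2) : signVal c ≠ 0 := by
  revert c; decide

theorem signVal_add_self_ne_zero (c : Fin 2) : signVal c + signVal c ≠ 0 := by
  revert c; decide

theorem weight_eq_sum {N : ℕ} {C : ColouredTri N 2} {x : Fin N}
    {s : Finset {t : Finset (Fin N) // IsTriangle C.T t}} (hs : ∀ t, x ∈ t.val ↔ t ∈ s) :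
    weight C x = ∑ t ∈ s, signVal (C.col t) := by
  rw [weight, finsum_eq_sum_of_support_subset _ fun t ht => ?_]
  · exact Finset.sum_congr rfl fun t ht => if_pos ((hs t).2 ht)
  · by_contra h
    exact ht (if_neg (mt (hs t).1 h))

theorem ncard_neighbours_le_three {N : ℕ} {C : ColouredTri N 2} {col : Fin N → Fin 4}
    (hcomp : Compatible C col) {x : Fin N}
    (hnone : ∀ y z : Fin N, y ≠ z → IsEdge C.T x y → IsEdge C.T x z → col y ≠ col z) :
    {y | IsEdge C.T x y}.ncard ≤ 3 := by
  have hx : x ∉ {y | IsEdge C.T x y} := fun h => h.1 rfl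
  have hinj : Set.InjOn col (insert x {y | IsEdge C.T x y}) := by
    rintro y (rfl | hy) z (rfl | hz) hyz
    · rfl
    · exact absurd hyz (hcomp.1 _ _ hz)
    · exact absurd hyz.symm (hcomp.1 _ _ hy)
    · by_contra h
      exact hnone y z h hy hz hyz
  have hcard := Set.ncard_le_ncard_of_injOn col (fun _ _ => Set.mem_univ _) hinj
  rw [Set.ncard_insert_of_notMem hx, Set.ncard_univ, Nat.card_eq_fintype_card,
    Fintype.card_fin] at hcard
  omega

section Triangles

variable {N : ℕ} {T : Triangulation N} {x p q y : Fin N} {t : Finset (Fin N)}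

theorem eq_of_isTriangle_of_mem (hnbr : ∀ w, IsEdge T x w → w = p ∨ w = q)
    (ht : IsTriangle T t) (hx : x ∈ t) : t = {x, p, q} := by
  obtain ⟨u, v, hu, hv, huv, rfl⟩ := exists_eq_insert_pair_of_isTriangle ht hx
  rcases hnbr u hu with rfl | rfl <;> rcases hnbr v hv with rfl | rfl
  · exact absurd rfl huv.1
  · rfl
  · rw [Finset.pair_comm]
  · exact absurd rfl huv.1

theorem eq_or_eq_of_isTriangle_of_mem (hnbr : ∀ w, IsEdge T x w → w = p ∨ w = q ∨ w = y)
    (hpq : ¬ IsEdge T p q) (ht : IsTriangle T t) (hx : x ∈ t) :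
    t = {x, y, p} ∨ t = {x, y, q} := by
  obtain ⟨u, v, hu, hv, huv, rfl⟩ := exists_eq_insert_pair_of_isTriangle ht hx
  rcases hnbr u hu with rfl | rfl | rfl <;> rcases hnbr v hv with rfl | rfl | rfl <;>
    first
    | exact absurd rfl huv.1
    | exact absurd huv hpq
    | exact absurd huv.symm hpq
    | exact Or.inl rfl
    | exact Or.inr rfl
    | exact Or.inl (congrArg (insert x) (Finset.pair_comm _ _))
    | exact Or.inr (congrArg (insert x) (Finset.pair_comm _ _))

end Triangles

section Weight

variable {N : ℕ} {C : ColouredTri N 2} {x p q : Fin N}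
  (hbdry : ∀ w, BdryAdj N x w ↔ w = p ∨ w = q) (hpq : p ≠ q)
include hbdry hpq

theorem degree_eq_two_and_weight_ne_zero (hx : ∀ j, ({x, j} : Finset (Fin N)) ∉ C.T.diags) :
    degree C.T x = 2 ∧ weight C x ≠ 0 := by
  have hnbr : ∀ y, IsEdge C.T x y ↔ y = p ∨ y = q := fun y => by
    simp only [isEdge_iff_eq_or_mem_diags hbdry hpq, hx, or_false]
  have ht : IsTriangle C.T {x, p, q} := isTriangle_of_isEdge ((hnbr p).2 (Or.inl rfl))
    ((hnbr q).2 (Or.inr rfl)) (isEdge_bdry_pair_of_forall_not_mem_diags hbdry hpq hx)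
  have hs : ∀ t : {t // IsTriangle C.T t}, x ∈ t.val ↔ t ∈ ({⟨_, ht⟩} : Finset _) := by
    rintro ⟨t, ht'⟩
    rw [Finset.mem_singleton, Subtype.mk.injEq]
    exact ⟨eq_of_isTriangle_of_mem (fun w => (hnbr w).1) ht',
      fun h => h ▸ Finset.mem_insert_self _ _⟩
  refine ⟨?_, ?_⟩
  · rw [degree_eq_ncard, show {y | IsEdge C.T x y} = {p, q} from Set.ext hnbr, Set.ncard_pair hpq]
  · rw [weight_eq_sum hs, Finset.sum_singleton]
    exact signVal_ne_zero _

theorem isEdge_iff_of_mem_diags {col : Fin N → Fin 4} (hcomp : Compatible C col)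
    (hnone : ∀ y z : Fin N, y ≠ z → IsEdge C.T x y → IsEdge C.T x z → col y ≠ col z)
    {y : Fin N} (hxy : ({x, y} : Finset (Fin N)) ∈ C.T.diags) (w : Fin N) :
    IsEdge C.T x w ↔ w = p ∨ w = q ∨ w = y := by
  obtain ⟨hyp, hyq⟩ := ne_and_ne_of_mem_diags hbdry hxy
  have hS : {p, q, y} = {w | IsEdge C.T x w} := by
    refine Set.eq_of_subset_of_ncard_le ?_ ?_
    · simp only [Set.insert_subset_iff, Set.singleton_subset_iff]
      exact ⟨(isEdge_iff_eq_or_mem_diags hbdry hpq).2 (Or.inl rfl),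
        (isEdge_iff_eq_or_mem_diags hbdry hpq).2 (Or.inr (Or.inl rfl)), isEdge_of_mem_diags hxy⟩
    · rw [Set.ncard_eq_three.2 ⟨p, q, y, hpq, hyp.symm, hyq.symm, rfl⟩]
      exact ncard_neighbours_le_three hcomp hnone
  have hw := (Set.ext_iff.1 hS w).symm
  simp only [Set.mem_insert_iff, Set.mem_singleton_iff] at hw
  exact hw

theorem degree_eq_three_and_weight_ne_zero {col : Fin N → Fin 4} (hcomp : Compatible C col)
    (hnone : ∀ y z : Fin N, y ≠ z → IsEdge C.T x y → IsEdge C.T x z → col y ≠ col z)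
    {y : Fin N} (hxy : ({x, y} : Finset (Fin N)) ∈ C.T.diags) :
    degree C.T x = 3 ∧ weight C x ≠ 0 := by
  have hp := (hbdry p).2 (Or.inl rfl)
  have hq := (hbdry q).2 (Or.inr rfl)
  obtain ⟨hyp, hyq⟩ := ne_and_ne_of_mem_diags hbdry hxy
  have hnbr := isEdge_iff_of_mem_diags hbdry hpq hcomp hnone hxy
  have hxp := (hnbr p).2 (Or.inl rfl)
  have hxq := (hnbr q).2 (Or.inr (Or.inl rfl))
  have hexy := (hnbr y).2 (Or.inr (Or.inr rfl))
  have hdiag : ∀ j, ({x, j} : Finset (Fin N)) ∈ C.T.diags → j = y :=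
    fun j hj => eq_of_mem_diags_of_isEdge_imp hbdry (fun w => (hnbr w).1) hj
  have h₁ : IsTriangle C.T {x, y, p} :=
    isTriangle_of_isEdge hexy hxp (isEdge_of_bdryAdj_of_unique_diag hp hxy hdiag).symm
  have h₂ : IsTriangle C.T {x, y, q} :=
    isTriangle_of_isEdge hexy hxq (isEdge_of_bdryAdj_of_unique_diag hq hxy hdiag).symm
  have hcol : C.col ⟨_, h₁⟩ = C.col ⟨_, h₂⟩ :=
    not_not.1 fun h => hnone p q hpq hxp hxq ((hcomp.2 x y p q h₁ h₂ hpq hxy).2 h)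
  have h₁₂ : (⟨_, h₁⟩ : {t // IsTriangle C.T t}) ≠ ⟨_, h₂⟩ := by
    rw [Ne, Subtype.mk.injEq]
    intro h
    have hq₁ : q ∈ ({x, y, p} : Finset (Fin N)) := h ▸ by simp
    simp only [Finset.mem_insert, Finset.mem_singleton] at hq₁
    rcases hq₁ with h | h | h
    exacts [hxq.1 h.symm, hyq h.symm, hpq h.symm]
  have hs : ∀ t : {t // IsTriangle C.T t},
      x ∈ t.val ↔ t ∈ ({⟨_, h₁⟩, ⟨_, h₂⟩} : Finset _) := by
    rintro ⟨t, ht⟩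
    simp only [Finset.mem_insert, Finset.mem_singleton, Subtype.mk.injEq]
    refine ⟨eq_or_eq_of_isTriangle_of_mem (fun w => (hnbr w).1)
      (not_isEdge_bdry_pair hbdry hpq hxy) ht, ?_⟩
    rintro (rfl | rfl) <;> exact Finset.mem_insert_self _ _
  refine ⟨?_, ?_⟩
  · rw [degree_eq_ncard, show {w | IsEdge C.T x w} = {p, q, y} from Set.ext hnbr,
      Set.ncard_eq_three.2 ⟨p, q, y, hpq, hyp.symm, hyq.symm, rfl⟩]
  · rw [weight_eq_sum hs, Finset.sum_pair h₁₂, hcol]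
    exact signVal_add_self_ne_zero _

end Weight

/-- If no two neighbours of `x` have the same colour in the 4-colouring associated
to the signed triangulation, then `x` has degree 2 or 3 and its weight is nonzero. -/
theorem degree_and_weight_of_all_distinct_colours (n : ℕ)
    (C : ColouredTri (n + 3) 2) (col : Fin (n + 3) → Fin 4)
    (hcomp : Compatible C col) (x : Fin (n + 3))
    (hnone : ∀ y z : Fin (n + 3), y ≠ z → IsEdge C.T x y → IsEdge C.T x z →
      col y ≠ col z) :
    (degree C.T x = 2 ∨ degree C.T x = 3) ∧ weight C x ≠ 0 := by
  obtain ⟨p, q, hpq, hbdry⟩ := exists_bdryAdj_iff n x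
  by_cases hdiag : ∃ y, ({x, y} : Finset (Fin (n + 3))) ∈ C.T.diags
  · obtain ⟨y, hxy⟩ := hdiag
    exact (degree_eq_three_and_weight_ne_zero hbdry hpq hcomp hnone hxy).imp_left Or.inr
  · exact (degree_eq_two_and_weight_ne_zero hbdry hpq (not_exists.1 hdiag)).imp_left Or.inl

end PolyFlip
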